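/- arXiv:2605.20673 — 2 statements merged into one kernel-verified Lean document; each statement's English description precedes it below -/
import Mathlib

section
/- Let ε ≥ 0, let D and E be persistence diagrams, and suppose there exists an ε-matching between D and E. Let ℓ₁ ≥ ℓ₂ ≥ ⋯ ≥ ℓ_N be the lifetimes of the points of D arranged in decreasing order, and let m be an index with 1 ≤ m < N such that ℓ_m − ℓ_{m+1} > 4ε. Then for every real number η with ℓ_{m+1} + 2ε < η < ℓ_m − 2ε, the diagram D has exactly m points with lifetime strictly greater than η, and the diagram E also has exactly m points with lifetime strictly greater than η. -/
/-- The lifetime of a point `p = (b, d)` of a persistence diagram is `d - b`. -/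
def lifetime (p : ℝ × ℝ) : ℝ := p.2 - p.1

/-- A persistence diagram is a finite multiset of points `(b, d) ∈ ℝ × ℝ` with `b ≤ d`. -/
def IsDiagram (D : Multiset (ℝ × ℝ)) : Prop := ∀ p ∈ D, p.1 ≤ p.2

/-- An `ε`-matching between persistence diagrams `D` and `E`, encoded by the multiset
`pairs` of matched pairs: a bijection from a sub-multiset `D' = pairs.map Prod.fst` of `D`
onto a sub-multiset `E' = pairs.map Prod.snd` of `E` such that matched points are within
sup-norm distance `ε`, and every unmatched point has lifetime at most `2ε`. -/
structure IsEMatching (ε : ℝ) (D E : Multiset (ℝ × ℝ))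
    (pairs : Multiset ((ℝ × ℝ) × (ℝ × ℝ))) : Prop where
  fst_le : pairs.map Prod.fst ≤ D
  snd_le : pairs.map Prod.snd ≤ E
  close : ∀ pq ∈ pairs, |pq.1.1 - pq.2.1| ≤ ε ∧ |pq.1.2 - pq.2.2| ≤ ε
  unmatched_left : ∀ p ∈ D - pairs.map Prod.fst, lifetime p ≤ 2 * ε
  unmatched_right : ∀ q ∈ E - pairs.map Prod.snd, lifetime q ≤ 2 * ε

/-- **Stability of lifetime counting under a persistence gap.**
If `D` and `E` admit an `ε`-matching, the lifetimes `ℓ₁ ≥ ⋯ ≥ ℓ_N` of `D` are sorted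
decreasingly (here `ℓ ⟨i,_⟩` is `ℓ_{i+1}`), and `ℓ_m − ℓ_{m+1} > 4ε`, then for every
`η` with `ℓ_{m+1} + 2ε < η < ℓ_m − 2ε`, both `D` and `E` have exactly `m` points of
lifetime strictly greater than `η`. -/
theorem lifetime_count_stable
    {ε : ℝ} (hε : 0 ≤ ε) {D E : Multiset (ℝ × ℝ)}
    (hD : IsDiagram D) (hE : IsDiagram E)
    {pairs : Multiset ((ℝ × ℝ) × (ℝ × ℝ))} (hmatch : IsEMatching ε D E pairs)
    {N : ℕ} (hN : Multiset.card D = N) (ℓ : Fin N → ℝ) (hsort : Antitone ℓ)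
    (hvals : D.map lifetime = Finset.univ.val.map ℓ)
    {m : ℕ} (hm1 : 1 ≤ m) (hmN : m < N)
    (hgap : ℓ ⟨m - 1, by omega⟩ - ℓ ⟨m, hmN⟩ > 4 * ε)
    {η : ℝ} (hη1 : ℓ ⟨m, hmN⟩ + 2 * ε < η) (hη2 : η < ℓ ⟨m - 1, by omega⟩ - 2 * ε) :
    Multiset.card (D.filter (fun p => η < lifetime p)) = m ∧
    Multiset.card (E.filter (fun p => η < lifetime p)) = m := by
  classical
  have hm' : m - 1 < N := by omega
  set i₁ : Fin N := ⟨m - 1, hm'⟩ with hi₁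
  set i₂ : Fin N := ⟨m, hmN⟩ with hi₂
  -- dichotomy for lifetimes of D
  have hdich : ∀ x ∈ D.map lifetime, x ≤ ℓ i₂ ∨ ℓ i₁ ≤ x := by
    intro x hx
    rw [hvals] at hx
    obtain ⟨i, _, rfl⟩ := Multiset.mem_map.mp hx
    by_cases h : m ≤ (i : ℕ)
    · exact Or.inl (hsort (by simpa [hi₂, Fin.le_def] using h))
    · refine Or.inr (hsort ?_)
      simp only [hi₁, Fin.le_def]
      omega
  have hℓ2 : 0 ≤ ℓ i₂ := by
    have hx : ℓ i₂ ∈ D.map lifetime := by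
      rw [hvals]
      exact Multiset.mem_map_of_mem ℓ (Finset.mem_univ i₂)
    obtain ⟨p, hp, hpe⟩ := Multiset.mem_map.mp hx
    have h1 := hD p hp
    simp only [lifetime] at hpe
    linarith
  have h2ε : 2 * ε < η := by linarith
  -- count in D equals m
  have hDcount : Multiset.card (D.filter (fun p => η < lifetime p)) = m := by
    have h1 : (D.map lifetime).filter (fun x => η < x)
        = (D.filter (fun p => η < lifetime p)).map lifetime :=
      Multiset.filter_map _ lifetime D
    have h2 : (Finset.univ.val.map ℓ).filter (fun x => η < x)
        = (Finset.univ.val.filter (fun i => η < ℓ i)).map ℓ :=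
      Multiset.filter_map _ ℓ Finset.univ.val
    have h3 : Multiset.card (D.filter (fun p => η < lifetime p))
        = (Finset.univ.filter (fun i : Fin N => η < ℓ i)).card := by
      have := congrArg Multiset.card (hvals ▸ h1)
      rw [Multiset.card_map] at this
      rw [← this, h2, Multiset.card_map]
      rfl
    rw [h3]
    have h4 : (Finset.univ.filter (fun i : Fin N => η < ℓ i))
        = (Finset.univ.filter (fun i : Fin N => (i : ℕ) < m)) := by
      apply Finset.filter_congr
      intro i _
      constructor
      · intro h
        by_contra hc
        have hle : i₂ ≤ i := by simp [hi₂, Fin.le_def]; omega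
        have := hsort hle
        exact absurd h (by linarith)
      · intro h
        have hle : i ≤ i₁ := by simp [hi₁, Fin.le_def]; omega
        have := hsort hle
        linarith
    rw [h4]
    have h5 : (Finset.univ.filter (fun i : Fin N => (i : ℕ) < m))
        = Finset.map (Fin.castLEEmb hmN.le) Finset.univ := by
      ext i
      simp only [Finset.mem_filter, Finset.mem_univ, true_and, Finset.mem_map,
        Fin.castLEEmb_apply]
      constructor
      · intro h
        exact ⟨⟨(i : ℕ), h⟩, by ext; simp⟩
      · rintro ⟨j, rfl⟩
        simp
    rw [h5, Finset.card_map, Finset.card_univ, Fintype.card_fin]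
  -- bridging: matched pairs are on the same side of η
  have hbridge : ∀ pq ∈ pairs, ((η < lifetime pq.1) ↔ (η < lifetime pq.2)) := by
    intro pq hpq
    have hpD : pq.1 ∈ D :=
      Multiset.mem_of_le hmatch.fst_le (Multiset.mem_map_of_mem Prod.fst hpq)
    obtain ⟨hc1, hc2⟩ := hmatch.close pq hpq
    have habs : |lifetime pq.1 - lifetime pq.2| ≤ 2 * ε := by
      have heq : lifetime pq.1 - lifetime pq.2
          = (pq.1.2 - pq.2.2) - (pq.1.1 - pq.2.1) := by
        simp only [lifetime]; ring
      rw [heq]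
      calc |(pq.1.2 - pq.2.2) - (pq.1.1 - pq.2.1)|
          ≤ |pq.1.2 - pq.2.2| + |pq.1.1 - pq.2.1| := abs_sub _ _
        _ ≤ 2 * ε := by linarith
    obtain ⟨ha1, ha2⟩ := abs_le.mp habs
    have hx : lifetime pq.1 ∈ D.map lifetime := Multiset.mem_map_of_mem lifetime hpD
    rcases hdich _ hx with h | h
    · constructor <;> intro h' <;> exact absurd h' (by linarith)
    · constructor <;> intro _ <;> linarith
  -- decompose D and E into matched and unmatched parts
  have hDdec : D - pairs.map Prod.fst + pairs.map Prod.fst = D :=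
    tsub_add_cancel_of_le hmatch.fst_le
  have hEdec : E - pairs.map Prod.snd + pairs.map Prod.snd = E :=
    tsub_add_cancel_of_le hmatch.snd_le
  have hDun : (D - pairs.map Prod.fst).filter (fun p => η < lifetime p) = 0 :=
    Multiset.filter_eq_nil.mpr (fun p hp => by
      have := hmatch.unmatched_left p hp; simp only [not_lt]; linarith)
  have hEun : (E - pairs.map Prod.snd).filter (fun p => η < lifetime p) = 0 :=
    Multiset.filter_eq_nil.mpr (fun p hp => by
      have := hmatch.unmatched_right p hp; simp only [not_lt]; linarith)
  have hDsplit : Multiset.card (D.filter (fun p => η < lifetime p))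
      = Multiset.card (pairs.filter (fun pq => η < lifetime pq.1)) := by
    conv_lhs => rw [← hDdec]
    rw [Multiset.filter_add, hDun, zero_add,
      Multiset.filter_map _ Prod.fst pairs, Multiset.card_map]
    rfl
  have hEsplit : Multiset.card (E.filter (fun p => η < lifetime p))
      = Multiset.card (pairs.filter (fun pq => η < lifetime pq.2)) := by
    conv_lhs => rw [← hEdec]
    rw [Multiset.filter_add, hEun, zero_add,
      Multiset.filter_map _ Prod.snd pairs, Multiset.card_map]
    rfl
  have hfeq : pairs.filter (fun pq => η < lifetime pq.1)
      = pairs.filter (fun pq => η < lifetime pq.2) :=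
    Multiset.filter_congr hbridge
  refine ⟨hDcount, ?_⟩
  rw [hEsplit, ← hfeq, ← hDsplit, hDcount]
end

section
/- Let ε ≥ 0, let D and E be persistence diagrams admitting an ε-matching, and let ℓ₁ ≥ ℓ₂ ≥ ⋯ ≥ ℓ_N be the lifetimes of the points of D in decreasing order. If 1 ≤ m < N and η satisfies η > ℓ_{m+1} + 2ε, then E contains at most m points with lifetime strictly greater than η. -/
/-! A point of `E` living longer than `η` cannot be unmatched, since `η > 2ε`; so it is matched,
and its partner in `D` lives longer than `η - 2ε > ℓ_{m+1}`. The partners are distinct points of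
`D`, and only the `m` longest-lived points of `D` can exceed `ℓ_{m+1}`. -/

theorem IsDiagram.lifetime_nonneg {D : Multiset (ℝ × ℝ)} (hD : IsDiagram D) {p : ℝ × ℝ}
    (hp : p ∈ D) : 0 ≤ lifetime p :=
  sub_nonneg.2 (hD p hp)

theorem lifetime_le_add_of_close {ε : ℝ} {p q : ℝ × ℝ} (h₁ : |p.1 - q.1| ≤ ε)
    (h₂ : |p.2 - q.2| ≤ ε) : lifetime q ≤ lifetime p + 2 * ε := by
  unfold lifetime
  linarith [abs_le.1 h₁, abs_le.1 h₂]

theorem Multiset.filter_eq_filter_of_le {α : Type*} [DecidableEq α] {p : α → Prop}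
    [DecidablePred p] {s t : Multiset α} (hst : s ≤ t) (hp : ∀ a ∈ t - s, ¬p a) :
    t.filter p = s.filter p := by
  rw [← add_tsub_cancel_of_le hst, filter_add, filter_eq_nil.2 hp, add_zero]

namespace IsEMatching

variable {ε : ℝ} {D E : Multiset (ℝ × ℝ)} {pairs : Multiset ((ℝ × ℝ) × (ℝ × ℝ))}

theorem filter_lt_lifetime_eq_map_snd (hmatch : IsEMatching ε D E pairs) {θ : ℝ}
    (hθ : 2 * ε ≤ θ) :
    E.filter (fun q => θ < lifetime q) =
      (pairs.filter (fun pq => θ < lifetime pq.2)).map Prod.snd := by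
  rw [Multiset.filter_eq_filter_of_le hmatch.snd_le
    (fun q hq => not_lt.2 ((hmatch.unmatched_right q hq).trans hθ)), Multiset.filter_map]
  rfl

theorem map_fst_le_filter_lt_lifetime (hmatch : IsEMatching ε D E pairs) (θ : ℝ) :
    (pairs.filter (fun pq => θ < lifetime pq.2)).map Prod.fst ≤
      D.filter (fun p => θ - 2 * ε < lifetime p) := by
  refine Multiset.le_filter.2
    ⟨(Multiset.map_le_map (Multiset.filter_le _ _)).trans hmatch.fst_le, ?_⟩
  simp only [Multiset.mem_map, Multiset.mem_filter]
  rintro _ ⟨pq, ⟨hpq, hθ⟩, rfl⟩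
  have hclose := hmatch.close pq hpq
  linarith [lifetime_le_add_of_close hclose.1 hclose.2]

theorem card_filter_lt_lifetime_le (hmatch : IsEMatching ε D E pairs) {θ : ℝ}
    (hθ : 2 * ε ≤ θ) :
    Multiset.card (E.filter (fun q => θ < lifetime q)) ≤
      Multiset.card (D.filter (fun p => θ - 2 * ε < lifetime p)) := by
  rw [hmatch.filter_lt_lifetime_eq_map_snd hθ, Multiset.card_map,
    ← Multiset.card_map Prod.fst]
  exact Multiset.card_le_card (hmatch.map_fst_le_filter_lt_lifetime θ)

end IsEMatching

theorem card_filter_lt_le_of_antitone {N : ℕ} {ℓ : Fin N → ℝ} (hℓ : Antitone ℓ)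
    {m : ℕ} (hmN : m < N) {t : ℝ} (ht : ℓ ⟨m, hmN⟩ < t) :
    Multiset.card ((Finset.univ.val.map ℓ).filter (fun x => t < x)) ≤ m := by
  rw [Multiset.filter_map, Multiset.card_map]
  calc Multiset.card (Finset.univ.val.filter ((fun x => t < x) ∘ ℓ))
      = (Finset.univ.filter (fun i => t < ℓ i)).card := rfl
    _ ≤ (Finset.Iio (⟨m, hmN⟩ : Fin N)).card := by
      refine Finset.card_le_card fun i hi => Finset.mem_Iio.2 (lt_of_not_ge fun hmi => ?_)
      exact (ht.trans (Finset.mem_filter.1 hi).2).not_ge (hℓ hmi)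
    _ = m := Fin.card_Iio _

theorem count_le_of_matching_general
    {ε : ℝ} {D E : Multiset (ℝ × ℝ)}
    (hD : IsDiagram D)
    {pairs : Multiset ((ℝ × ℝ) × (ℝ × ℝ))} (hmatch : IsEMatching ε D E pairs)
    {N : ℕ} (ℓ : Fin N → ℝ) (hsort : Antitone ℓ)
    (hvals : D.map lifetime = Finset.univ.val.map ℓ)
    {m : ℕ} (hmN : m < N)
    {η : ℝ} (hη : ℓ ⟨m, hmN⟩ + 2 * ε < η) :
    Multiset.card (E.filter (fun p => η < lifetime p)) ≤ m := by
  have hℓ_nonneg : 0 ≤ ℓ ⟨m, hmN⟩ := by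
    have hmem : ℓ ⟨m, hmN⟩ ∈ D.map lifetime :=
      hvals ▸ Multiset.mem_map_of_mem ℓ (Finset.mem_univ_val _)
    obtain ⟨p, hp, hpℓ⟩ := Multiset.mem_map.1 hmem
    exact hpℓ ▸ hD.lifetime_nonneg hp
  calc Multiset.card (E.filter (fun p => η < lifetime p))
      ≤ Multiset.card (D.filter (fun p => η - 2 * ε < lifetime p)) :=
        hmatch.card_filter_lt_lifetime_le (by linarith)
    _ = Multiset.card ((D.map lifetime).filter (fun x => η - 2 * ε < x)) := by
        rw [Multiset.filter_map, Multiset.card_map]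
        rfl
    _ ≤ m := hvals ▸ card_filter_lt_le_of_antitone hsort hmN (by linarith)

/-- **Upper-bound counting step.** If `D` and `E` admit an `ε`-matching, the lifetimes
`ℓ₁ ≥ ⋯ ≥ ℓ_N` of `D` are sorted decreasingly (here `ℓ ⟨i,_⟩` is `ℓ_{i+1}`), `1 ≤ m < N`,
and `η > ℓ_{m+1} + 2ε`, then `E` has at most `m` points of lifetime strictly greater
than `η`. -/
theorem count_le_of_matching
    {ε : ℝ} (hε : 0 ≤ ε) {D E : Multiset (ℝ × ℝ)}
    (hD : IsDiagram D) (hE : IsDiagram E)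
    {pairs : Multiset ((ℝ × ℝ) × (ℝ × ℝ))} (hmatch : IsEMatching ε D E pairs)
    {N : ℕ} (hN : Multiset.card D = N) (ℓ : Fin N → ℝ) (hsort : Antitone ℓ)
    (hvals : D.map lifetime = Finset.univ.val.map ℓ)
    {m : ℕ} (hm1 : 1 ≤ m) (hmN : m < N)
    {η : ℝ} (hη : ℓ ⟨m, hmN⟩ + 2 * ε < η) :
    Multiset.card (E.filter (fun p => η < lifetime p)) ≤ m :=
  count_le_of_matching_general hD hmatch ℓ hsort hvals hmN hη
end
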